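/- Let p : Fin 2 × Fin 2 → Fin 2 × Fin 2 → ℝ be a conditional probability distribution p(a,b|x,y) (nonnegative, summing to 1 over (a,b) for each (x,y)). Define the eight CHSH scores CHSH_γ[p] = (1/4) ∑_{x,y,a,b} [a + b ≡ x·y + γ₁·x + γ₂·y + γ₀ (mod 2)] · p(a,b|x,y) for γ = (γ₀,γ₁,γ₂) ∈ {0,1}³. Then for any two distinct games γ ≠ γ', if CHSH_γ[p] > 3/4 then CHSH_{γ'}[p] ≤ 3/4. -/
import Mathlib


open Finset

/-- Winning probability of the CHSH game with winning condition
`a ⊕ b = x·y ⊕ γ₁·x ⊕ γ₂·y ⊕ γ₀` for uniform inputs `x,y`. -/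
noncomputable def chshScore (γ0 γ1 γ2 : Fin 2)
    (p : Fin 2 × Fin 2 → Fin 2 × Fin 2 → ℝ) : ℝ :=
  (1/4) * ∑ x : Fin 2, ∑ y : Fin 2, ∑ a : Fin 2, ∑ b : Fin 2,
    (if (a.val + b.val) % 2
        = (x.val * y.val + γ1.val * x.val + γ2.val * y.val + γ0.val) % 2
     then p (a, b) (x, y) else 0)

set_option maxHeartbeats 4000000 in
theorem chsh_no_two_games_above_three_quarters
    (p : Fin 2 × Fin 2 → Fin 2 × Fin 2 → ℝ)
    (hpos : ∀ ab xy : Fin 2 × Fin 2, 0 ≤ p ab xy)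
    (hnorm : ∀ xy : Fin 2 × Fin 2, ∑ a : Fin 2, ∑ b : Fin 2, p (a, b) xy = 1)
    (γ γ' : Fin 2 × Fin 2 × Fin 2) (hne : γ ≠ γ')
    (h : chshScore γ.1 γ.2.1 γ.2.2 p > 3/4) :
    chshScore γ'.1 γ'.2.1 γ'.2.2 p ≤ 3/4 := by
  have h00 := hnorm (0,0); have h01 := hnorm (0,1)
  have h10 := hnorm (1,0); have h11 := hnorm (1,1)
  simp only [Fin.sum_univ_two] at h00 h01 h10 h11
  norm_num at h00 h01 h10 h11
  have hp : ∀ a b x y : Fin 2, 0 ≤ p (a,b) (x,y) := fun a b x y => hpos (a,b) (x,y)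
  have q1 := hp 0 0 0 0; have q2 := hp 0 0 0 1; have q3 := hp 0 0 1 0
  have q4 := hp 0 0 1 1; have q5 := hp 0 1 0 0; have q6 := hp 0 1 0 1
  have q7 := hp 0 1 1 0; have q8 := hp 0 1 1 1; have q9 := hp 1 0 0 0
  have q10 := hp 1 0 0 1; have q11 := hp 1 0 1 0; have q12 := hp 1 0 1 1
  have q13 := hp 1 1 0 0; have q14 := hp 1 1 0 1; have q15 := hp 1 1 1 0
  have q16 := hp 1 1 1 1
  norm_num at q1 q2 q3 q4 q5 q6 q7 q8 q9 q10 q11 q12 q13 q14 q15 q16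
  obtain ⟨g0, g1, g2⟩ := γ
  obtain ⟨g0', g1', g2'⟩ := γ'
  simp only [chshScore, Fin.sum_univ_two] at h ⊢
  fin_cases g0 <;> fin_cases g1 <;> fin_cases g2 <;>
    fin_cases g0' <;> fin_cases g1' <;> fin_cases g2' <;>
    first
    | exact absurd rfl hne
    | (norm_num at h ⊢
       linarith [q1,q2,q3,q4,q5,q6,q7,q8,q9,q10,q11,q12,q13,q14,q15,q16])
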